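/- Let K ⊂ ℝ³ be a centrally symmetric convex body which is strongly convex with smooth boundary (K ∈ 𝒦̂). Then Θ(Z(π)K) = π − Θ(K), Φ(Z(π)K) = Φ(K), Ψ(Z(π)K) = π − Ψ(K), and F(Z(π)K) = −F(K), G(Z(π)K) = G(K), H(Z(π)K) = −H(K). -/

import Mathlib

open MeasureTheory Real Set
open scoped RealInnerProductSpace

noncomputable section

/-- Euclidean 3-space. -/
abbrev E3 := EuclideanSpace ℝ (Fin 3)

/-- The point `(a, b, c)` of `ℝ³`. -/
def pt (a b c : ℝ) : E3 := (WithLp.equiv 2 (Fin 3 → ℝ)).symm ![a, b, c]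

/-- The polar body `K° = {y : ⟪x, y⟫ ≤ 1 for all x ∈ K}`. -/
def polarBody (K : Set E3) : Set E3 := {y : E3 | ∀ x ∈ K, ⟪x, y⟫ ≤ 1}

/-- The radial function `ρ_K(x) = max {t ≥ 0 : t • x ∈ K}`. -/
def radial (K : Set E3) (x : E3) : ℝ := sSup {t : ℝ | 0 ≤ t ∧ t • x ∈ K}

/-- The spherical parametrization `P(α, β)`. -/
def sphP (α β : ℝ) : E3 := pt (cos α) (sin α * cos β) (sin α * sin β)

/-- Rotation by angle `θ` about the `x`-axis. -/
def rotX (θ : ℝ) (p : E3) : E3 :=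
  pt (p 0) (cos θ * p 1 - sin θ * p 2) (sin θ * p 1 + cos θ * p 2)

/-- Rotation by angle `φ` about the `y`-axis. -/
def rotY (φ : ℝ) (p : E3) : E3 :=
  pt (cos φ * p 0 + sin φ * p 2) (p 1) (-sin φ * p 0 + cos φ * p 2)

/-- Rotation by angle `ψ` about the `z`-axis. -/
def rotZ (ψ : ℝ) (p : E3) : E3 :=
  pt (cos ψ * p 0 - sin ψ * p 1) (sin ψ * p 0 + cos ψ * p 1) (p 2)

/-- `K ∈ 𝒦̂`: a centrally symmetric convex body in `ℝ³` which is strongly convex with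
smooth boundary, i.e. `h_K = gauge²/2` is `C^∞` away from the origin and has positive
definite Hessian at every point of the unit sphere. -/
def IsKhat (K : Set E3) : Prop :=
  IsCompact K ∧ Convex ℝ K ∧ (interior K).Nonempty ∧ K = -K ∧
    ContDiffOn ℝ (⊤ : ℕ∞) (fun x => gauge K x ^ 2 / 2) {0}ᶜ ∧
    ∀ x : E3, ‖x‖ = 1 → ∀ v : E3, v ≠ 0 →
      0 < fderiv ℝ (fderiv ℝ (fun y => gauge K y ^ 2 / 2)) x v v

/-- `Θ` satisfies the defining property of `Θ(K)`. -/
def ThetaEq (K : Set E3) (Θ : ℝ) : Prop :=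
  Θ ∈ Ioo 0 π ∧
    ∫ β in (0:ℝ)..Θ, ∫ α in (0:ℝ)..π, radial K (sphP α β) ^ 3 * sin α
      = ∫ β in Θ..π, ∫ α in (0:ℝ)..π, radial K (sphP α β) ^ 3 * sin α

/-- `Φ` satisfies the defining property of `Φ(K)`. -/
def PhiEq (K : Set E3) (Φ : ℝ) : Prop :=
  Φ ∈ Ioo 0 π ∧
    ∫ α in (0:ℝ)..Φ, radial K (sphP α 0) ^ 2 = ∫ α in Φ..π, radial K (sphP α 0) ^ 2

/-- `Ψ` satisfies the defining property of `Ψ(K)`, where `Θ = Θ(K)`. -/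
def PsiEq (K : Set E3) (Θ Ψ : ℝ) : Prop :=
  Ψ ∈ Ioo 0 π ∧
    ∫ α in (0:ℝ)..Ψ, radial K (sphP α Θ) ^ 2 = ∫ α in Ψ..π, radial K (sphP α Θ) ^ 2

/-- The unitriangular map whose inverse is the matrix `𝒜(K)` (for `Θ = Θ(K)`, `Φ = Φ(K)`,
`Ψ = Ψ(K)`); thus the body `𝒜(K) K` is the preimage `shear Θ Φ Ψ ⁻¹' K`. -/
def shear (Θ Φ Ψ : ℝ) (p : E3) : E3 :=
  pt (p 0 + p 1 / tan Φ + p 2 / (sin Θ * tan Ψ)) (p 1 + p 2 / tan Θ) (p 2)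

/-- `v₁ = vol(L ∩ {x ≥ 0, y ≥ 0, z ≥ 0})`. -/
def vol₁ (L : Set E3) : ℝ := (volume (L ∩ {p : E3 | 0 ≤ p 0 ∧ 0 ≤ p 1 ∧ 0 ≤ p 2})).toReal

/-- `v₂ = vol(L ∩ {x ≤ 0, y ≥ 0, z ≥ 0})`. -/
def vol₂ (L : Set E3) : ℝ := (volume (L ∩ {p : E3 | p 0 ≤ 0 ∧ 0 ≤ p 1 ∧ 0 ≤ p 2})).toReal

/-- `v₃ = vol(L ∩ {x ≤ 0, y ≤ 0, z ≥ 0})`. -/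
def vol₃ (L : Set E3) : ℝ := (volume (L ∩ {p : E3 | p 0 ≤ 0 ∧ p 1 ≤ 0 ∧ 0 ≤ p 2})).toReal

/-- `v₄ = vol(L ∩ {x ≥ 0, y ≤ 0, z ≥ 0})`. -/
def vol₄ (L : Set E3) : ℝ := (volume (L ∩ {p : E3 | 0 ≤ p 0 ∧ p 1 ≤ 0 ∧ 0 ≤ p 2})).toReal

/-- `F` applied to the transformed body `L' = 𝒜(K) K`. -/
def Ffun (L : Set E3) : ℝ :=
  (μH[2] (L ∩ {p : E3 | p 0 = 0 ∧ 0 ≤ p 1 ∧ 0 ≤ p 2})).toReal -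
    (μH[2] (L ∩ {p : E3 | p 0 = 0 ∧ p 1 ≤ 0 ∧ 0 ≤ p 2})).toReal

/-- `G = v₁ + v₃ - v₂ - v₄` applied to the transformed body `L' = 𝒜(K) K`. -/
def Gfun (L : Set E3) : ℝ := vol₁ L + vol₃ L - vol₂ L - vol₄ L

/-- `H = v₁ + v₄ - v₂ - v₃` applied to the transformed body `L' = 𝒜(K) K`. -/
def Hfun (L : Set E3) : ℝ := vol₁ L + vol₄ L - vol₂ L - vol₃ L

/-- Condition (★). -/
def StarCond (K : Set E3) : Prop :=
  volume (K ∩ {p : E3 | 0 ≤ p 0 ∧ 0 ≤ p 1 ∧ 0 ≤ p 2})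
      = volume (K ∩ {p : E3 | p 0 ≤ 0 ∧ 0 ≤ p 1 ∧ 0 ≤ p 2}) ∧
    volume (K ∩ {p : E3 | p 0 ≤ 0 ∧ 0 ≤ p 1 ∧ 0 ≤ p 2})
      = volume (K ∩ {p : E3 | p 0 ≤ 0 ∧ p 1 ≤ 0 ∧ 0 ≤ p 2}) ∧
    volume (K ∩ {p : E3 | p 0 ≤ 0 ∧ p 1 ≤ 0 ∧ 0 ≤ p 2})
      = volume (K ∩ {p : E3 | 0 ≤ p 0 ∧ p 1 ≤ 0 ∧ 0 ≤ p 2}) ∧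
    μH[2] (K ∩ {p : E3 | p 0 = 0 ∧ 0 ≤ p 1 ∧ 0 ≤ p 2})
      = μH[2] (K ∩ {p : E3 | p 0 = 0 ∧ p 1 ≤ 0 ∧ 0 ≤ p 2}) ∧
    μH[2] (K ∩ {p : E3 | p 1 = 0 ∧ 0 ≤ p 0 ∧ 0 ≤ p 2})
      = μH[2] (K ∩ {p : E3 | p 1 = 0 ∧ 0 ≤ p 0 ∧ p 2 ≤ 0}) ∧
    μH[2] (K ∩ {p : E3 | p 2 = 0 ∧ 0 ≤ p 0 ∧ 0 ≤ p 1})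
      = μH[2] (K ∩ {p : E3 | p 2 = 0 ∧ p 0 ≤ 0 ∧ 0 ≤ p 1})

/-- The cube `[-1,1]³`. -/
def cube : Set E3 := {x : E3 | ∀ i, x i ∈ Icc (-1:ℝ) 1}

/-- The cross product on `ℝ³`. -/
def cross (a b : E3) : E3 :=
  pt (a 1 * b 2 - a 2 * b 1) (a 2 * b 0 - a 0 * b 2) (a 0 * b 1 - a 1 * b 0)

/-! `Z(π)` maps `P(α, β)` to `P(π - α, π - β)`, so the radial function of `Z(π)K` is that of `K`
with both angles reflected. The angles `Θ`, `Φ`, `Ψ` bisect integrals of positive continuous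
functions and are therefore unique; reflecting the parameter turns `Θ` and `Ψ` into `π - Θ` and
`π - Ψ`, while on the great circle `β = 0` the rotation acts as `x ↦ -x`, which central symmetry
absorbs, so `Φ` is unchanged. Consequently the sheared body of `Z(π)K` is `Z(π)` applied to that
of `K`, and `Z(π)` fixes the half-space `z ≥ 0` while swapping the quadrants `±x, ±y`, which gives
the signs of `F`, `G` and `H`. -/

open Topology

@[simp] lemma pt_apply_zero (a b c : ℝ) : pt a b c 0 = a := rfl
@[simp] lemma pt_apply_one (a b c : ℝ) : pt a b c 1 = b := rfl
@[simp] lemma pt_apply_two (a b c : ℝ) : pt a b c 2 = c := rfl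

lemma E3.ext {p q : E3} (h0 : p 0 = q 0) (h1 : p 1 = q 1) (h2 : p 2 = q 2) : p = q := by
  ext i; fin_cases i <;> assumption

lemma Continuous.pt {X : Type*} [TopologicalSpace X] {f g h : X → ℝ}
    (hf : Continuous f) (hg : Continuous g) (hh : Continuous h) :
    Continuous fun x => pt (f x) (g x) (h x) := by
  refine (PiLp.continuous_toLp 2 (fun _ : Fin 3 => ℝ)).comp (continuous_pi fun i => ?_)
  fin_cases i <;> simpa

section Bisector

open intervalIntegral

def IsBisector (f : ℝ → ℝ) (l r a : ℝ) : Prop :=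
  a ∈ Ioo l r ∧ ∫ x in l..a, f x = ∫ x in a..r, f x

variable {f : ℝ → ℝ} {l r a b : ℝ}

lemma IsBisector.comp_sub_left (h : IsBisector f l r a) (d : ℝ) :
    IsBisector (fun x => f (d - x)) (d - r) (d - l) (d - a) := by
  obtain ⟨⟨hla, har⟩, hint⟩ := h
  refine ⟨⟨by linarith, by linarith⟩, ?_⟩
  rw [integral_comp_sub_left, integral_comp_sub_left]
  simpa only [sub_sub_cancel] using hint.symm

lemma IsBisector.unique (hf : IntervalIntegrable f volume l r) (hpos : ∀ x ∈ Ioo l r, 0 < f x)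
    (ha : IsBisector f l r a) (hb : IsBisector f l r b) : a = b := by
  obtain ⟨⟨hla, har⟩, Ha⟩ := ha
  obtain ⟨⟨hlb, hbr⟩, Hb⟩ := hb
  have hsub : ∀ u ∈ Icc l r, ∀ v ∈ Icc l r, IntervalIntegrable f volume u v := fun u hu v hv =>
    hf.mono_set (by rw [uIcc_of_le (hla.trans har).le]; exact uIcc_subset_Icc hu hv)
  have hl : l ∈ Icc l r := ⟨le_rfl, (hla.trans har).le⟩
  have hr : r ∈ Icc l r := ⟨(hla.trans har).le, le_rfl⟩
  have ha' : a ∈ Icc l r := ⟨hla.le, har.le⟩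
  have hb' : b ∈ Icc l r := ⟨hlb.le, hbr.le⟩
  have hzero : ∫ x in a..b, f x = 0 := by
    have := integral_add_adjacent_intervals (hsub l hl a ha') (hsub a ha' b hb')
    have := integral_add_adjacent_intervals (hsub a ha' b hb') (hsub b hb' r hr)
    linarith
  have hposOn : ∀ {u v}, l ≤ u → v ≤ r → u < v → 0 < ∫ x in u..v, f x := fun hu hv huv =>
    intervalIntegral_pos_of_pos_on (hsub _ ⟨hu, huv.le.trans hv⟩ _ ⟨hu.trans huv.le, hv⟩)
      (fun x hx => hpos x ⟨hu.trans_lt hx.1, hx.2.trans_le hv⟩) huv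
  rcases lt_trichotomy a b with hab | hab | hab
  · exact absurd hzero (hposOn hla.le hbr.le hab).ne'
  · exact hab
  · rw [integral_symm] at hzero
    exact absurd (neg_eq_zero.1 hzero) (hposOn hlb.le har.le hab).ne'

end Bisector

section Radial

variable {K : Set E3}

lemma radial_preimage_linearMap (e : E3 →ₗ[ℝ] E3) (x : E3) :
    radial (e ⁻¹' K) x = radial K (e x) := by
  simp only [radial, mem_preimage, map_smul]

lemma radial_neg_of_neg_eq (hK : -K = K) (x : E3) : radial K (-x) = radial K x := by
  conv_lhs => rw [← hK]
  simp only [radial, smul_neg, Set.neg_mem_neg]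

lemma IsCompact.gauge_pos (hKc : IsCompact K) (hK0 : K ∈ 𝓝 0) {x : E3} (hx : x ≠ 0) :
    0 < gauge K x :=
  (_root_.gauge_pos (absorbent_nhds_zero hK0)
    ((NormedSpace.isVonNBounded_iff ℝ).2 hKc.isBounded)).2 hx

variable (hKc : IsCompact K) (hKconv : Convex ℝ K) (hK0 : K ∈ 𝓝 0)
include hKc hKconv hK0

lemma radial_eq_inv_gauge {x : E3} (hx : x ≠ 0) : radial K x = (gauge K x)⁻¹ := by
  have hg := hKc.gauge_pos hK0 hx
  have hset : {t : ℝ | 0 ≤ t ∧ t • x ∈ K} = Icc 0 (gauge K x)⁻¹ := by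
    ext t
    simp only [mem_ofPred_eq, mem_Icc, and_congr_right_iff]
    intro ht
    have hmem : t • x ∈ K ↔ gauge K (t • x) ≤ 1 := by
      rw [gauge_le_one_iff_mem_closure hKconv hK0, hKc.isClosed.closure_eq]
    rw [hmem, gauge_smul_of_nonneg ht, smul_eq_mul, inv_eq_one_div, le_div_iff₀ hg]
  rw [radial, hset, csSup_Icc (inv_pos.2 hg).le]

lemma radial_pos {x : E3} (hx : x ≠ 0) : 0 < radial K x := by
  rw [radial_eq_inv_gauge hKc hKconv hK0 hx]
  exact inv_pos.2 (hKc.gauge_pos hK0 hx)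

lemma Continuous.radial_comp {X : Type*} [TopologicalSpace X] {f : X → E3}
    (hf : Continuous f) (hf0 : ∀ x, f x ≠ 0) : Continuous fun x => radial K (f x) := by
  simp only [radial_eq_inv_gauge hKc hKconv hK0 (hf0 _)]
  exact ((continuous_gauge hKconv hK0).comp hf).inv₀ fun x => (hKc.gauge_pos hK0 (hf0 x)).ne'

end Radial

lemma Convex.mem_nhds_zero_of_neg_eq {E : Type*} [AddCommGroup E] [Module ℝ E]
    [TopologicalSpace E] [IsTopologicalAddGroup E] [ContinuousSMul ℝ E] {K : Set E}
    (hconv : Convex ℝ K) (hsymm : -K = K) (hint : (interior K).Nonempty) : K ∈ 𝓝 0 := by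
  obtain ⟨x, hx⟩ := hint
  have hx' : -x ∈ interior K := by
    rw [← hsymm, show -K = Homeomorph.neg E ⁻¹' K from rfl, ← Homeomorph.preimage_interior]
    simpa using hx
  simpa using mem_interior_iff_mem_nhds.1 <|
    hconv.interior hx hx' (by norm_num : (0:ℝ) ≤ 1/2) (by norm_num : (0:ℝ) ≤ 1/2)
      (by norm_num)

section Rotation

lemma rotZ_rotZ (a b : ℝ) (p : E3) : rotZ a (rotZ b p) = rotZ (a + b) p := by
  apply E3.ext <;> simp only [rotZ, pt_apply_zero, pt_apply_one, pt_apply_two, cos_add, sin_add] <;>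
    ring

lemma rotZ_zero (p : E3) : rotZ 0 p = p := by
  apply E3.ext <;> simp [rotZ]

def rotZEquiv (ψ : ℝ) : E3 ≃ₗᵢ[ℝ] E3 where
  toFun := rotZ ψ
  invFun := rotZ (-ψ)
  map_add' p q := by apply E3.ext <;> simp only [rotZ, PiLp.add_apply, pt_apply_zero,
    pt_apply_one, pt_apply_two] <;> ring
  map_smul' t p := by apply E3.ext <;> simp only [rotZ, PiLp.smul_apply, smul_eq_mul,
    pt_apply_zero, pt_apply_one, pt_apply_two, RingHom.id_apply] <;> ring
  left_inv p := by simp only [rotZ_rotZ, neg_add_cancel, rotZ_zero]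
  right_inv p := by simp only [rotZ_rotZ, add_neg_cancel, rotZ_zero]
  norm_map' p := by
    simp only [LinearEquiv.coe_mk, LinearMap.coe_mk, AddHom.coe_mk, EuclideanSpace.norm_eq,
      Fin.sum_univ_three, rotZ, pt_apply_zero, pt_apply_one, pt_apply_two, Real.norm_eq_abs, sq_abs]
    congr 1
    linear_combination (p 0 ^ 2 + p 1 ^ 2) * sin_sq_add_cos_sq ψ

lemma volume_preimage_rotZ (ψ : ℝ) (s : Set E3) : volume (rotZ ψ ⁻¹' s) = volume s :=
  (rotZEquiv ψ).measurePreserving.measure_preimage_equiv (f := (rotZEquiv ψ).toMeasurableEquiv) s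

lemma hausdorffMeasure_preimage_rotZ (ψ d : ℝ) (s : Set E3) : μH[d] (rotZ ψ ⁻¹' s) = μH[d] s :=
  (rotZEquiv ψ).toIsometryEquiv.hausdorffMeasure_preimage d s

lemma rotZ_pi_apply (p : E3) : rotZ π p = pt (-p 0) (-p 1) (p 2) := by
  apply E3.ext <;> simp [rotZ]

lemma rotZ_pi_involutive : Function.Involutive (rotZ π) := fun p => by
  apply E3.ext <;> simp [rotZ_pi_apply]

lemma rotZ_pi_image (s : Set E3) : rotZ π '' s = rotZ π ⁻¹' s := by
  rw [rotZ_pi_involutive.image_eq_preimage_symm]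

lemma rotZ_pi_preimage_inter (L s : Set E3) :
    rotZ π ⁻¹' L ∩ s = rotZ π ⁻¹' (L ∩ rotZ π ⁻¹' s) := by
  rw [preimage_inter, ← preimage_comp, rotZ_pi_involutive.comp_self, preimage_id]

end Rotation

section Sphere

variable {X : Type*} [TopologicalSpace X]

@[fun_prop] lemma Continuous.sphP {f g : X → ℝ} (hf : Continuous f) (hg : Continuous g) :
    Continuous fun x => sphP (f x) (g x) := by
  unfold _root_.sphP
  exact Continuous.pt (by fun_prop) (by fun_prop) (by fun_prop)

lemma sphP_ne_zero (α β : ℝ) : sphP α β ≠ 0 := by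
  intro h
  have h0 : cos α = 0 := congrArg (· 0) h
  have h1 : sin α * cos β = 0 := congrArg (· 1) h
  have h2 : sin α * sin β = 0 := congrArg (· 2) h
  have := sin_sq_add_cos_sq α
  have := sin_sq_add_cos_sq β
  nlinarith

lemma rotZ_pi_sphP (α β : ℝ) : rotZ π (sphP α β) = sphP (π - α) (π - β) := by
  apply E3.ext <;> simp [rotZ_pi_apply, sphP, cos_pi_sub, sin_pi_sub]

lemma rotZ_pi_sphP_zero (α : ℝ) : rotZ π (sphP α 0) = -sphP α 0 := by
  apply E3.ext <;> simp [rotZ_pi_apply, sphP]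

end Sphere

lemma radial_rotZ_pi_image (K : Set E3) (x : E3) :
    radial (rotZ π '' K) x = radial K (rotZ π x) := by
  rw [rotZ_pi_image]
  exact radial_preimage_linearMap (rotZEquiv π).toLinearEquiv.toLinearMap x

/-- In spherical coordinates about the `x`-axis, `wedgeDensity K β / 3` is the density in `β` of
the volume of `K`, so `Θ(K)` bisects the volume of `K ∩ {z ≥ 0}` by a half-plane through the
`x`-axis. -/
def wedgeDensity (K : Set E3) (β : ℝ) : ℝ := ∫ α in (0:ℝ)..π, radial K (sphP α β) ^ 3 * sin α

lemma thetaEq_iff_isBisector {K : Set E3} {Θ : ℝ} :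
    ThetaEq K Θ ↔ IsBisector (wedgeDensity K) 0 π Θ := Iff.rfl

lemma wedgeDensity_rotZ_pi_image (K : Set E3) (β : ℝ) :
    wedgeDensity (rotZ π '' K) β = wedgeDensity K (π - β) := by
  have h := intervalIntegral.integral_comp_sub_left
    (fun α => radial K (sphP α (π - β)) ^ 3 * sin α) π (a := 0) (b := π)
  simp only [sin_pi_sub, sub_self, sub_zero] at h
  simp only [wedgeDensity, radial_rotZ_pi_image, rotZ_pi_sphP, h]

section Angles

variable {K : Set E3} (hKc : IsCompact K) (hKconv : Convex ℝ K) (hK0 : K ∈ 𝓝 0)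
include hKc hKconv hK0

lemma continuous_wedgeDensity : Continuous (wedgeDensity K) :=
  intervalIntegral.continuous_parametric_intervalIntegral_of_continuous'
    ((((continuous_snd.sphP continuous_fst).radial_comp hKc hKconv hK0
      fun _ => sphP_ne_zero _ _).pow 3).mul (by fun_prop)) 0 π

lemma wedgeDensity_pos (β : ℝ) : 0 < wedgeDensity K β :=
  intervalIntegral.intervalIntegral_pos_of_pos_on
    (((((continuous_id.sphP continuous_const).radial_comp hKc hKconv hK0
      fun _ => sphP_ne_zero _ _).pow 3).mul continuous_sin).intervalIntegrable 0 π)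
    (fun α hα => mul_pos (pow_pos (radial_pos hKc hKconv hK0 (sphP_ne_zero α β)) 3)
      (sin_pos_of_pos_of_lt_pi hα.1 hα.2))
    pi_pos

lemma IsBisector.eq_of_radial_sphP_sq {f : ℝ → ℝ} (hf : Continuous f) {β a b : ℝ}
    (ha : IsBisector (fun α => radial K (sphP (f α) β) ^ 2) 0 π a)
    (hb : IsBisector (fun α => radial K (sphP (f α) β) ^ 2) 0 π b) : a = b :=
  ha.unique ((((hf.sphP continuous_const).radial_comp hKc hKconv hK0
      fun _ => sphP_ne_zero _ _).pow 2).intervalIntegrable 0 π)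
    (fun _ _ => pow_pos (radial_pos hKc hKconv hK0 (sphP_ne_zero _ _)) 2) hb

lemma ThetaEq.rotZ_pi_image {Θ Θ' : ℝ} (hΘ : ThetaEq K Θ) (hΘ' : ThetaEq (rotZ π '' K) Θ') :
    Θ' = π - Θ := by
  rw [thetaEq_iff_isBisector] at hΘ hΘ'
  rw [funext (wedgeDensity_rotZ_pi_image K)] at hΘ'
  have hΘrefl : IsBisector (fun β => wedgeDensity K (π - β)) 0 π (π - Θ) := by
    simpa only [sub_self, sub_zero] using hΘ.comp_sub_left π
  exact hΘ'.unique (((continuous_wedgeDensity hKc hKconv hK0).comp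
      (continuous_const.sub continuous_id)).intervalIntegrable 0 π)
    (fun _ _ => wedgeDensity_pos hKc hKconv hK0 _) hΘrefl

lemma PhiEq.rotZ_pi_image (hsymm : -K = K) {Φ Φ' : ℝ} (hΦ : PhiEq K Φ)
    (hΦ' : PhiEq (rotZ π '' K) Φ') : Φ' = Φ := by
  have hrad (α : ℝ) : radial (rotZ π '' K) (sphP α 0) = radial K (sphP α 0) := by
    rw [radial_rotZ_pi_image, rotZ_pi_sphP_zero, radial_neg_of_neg_eq hsymm]
  have hΦ'' : IsBisector (fun α => radial (rotZ π '' K) (sphP α 0) ^ 2) 0 π Φ' := hΦ'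
  simp only [hrad] at hΦ''
  exact hΦ''.eq_of_radial_sphP_sq hKc hKconv hK0 continuous_id hΦ

lemma PsiEq.rotZ_pi_image {Θ Ψ Ψ' : ℝ} (hΨ : PsiEq K Θ Ψ) (hΨ' : PsiEq (rotZ π '' K) (π - Θ) Ψ') :
    Ψ' = π - Ψ := by
  have hΨ'' : IsBisector (fun α => radial (rotZ π '' K) (sphP α (π - Θ)) ^ 2) 0 π Ψ' := hΨ'
  simp only [radial_rotZ_pi_image, rotZ_pi_sphP, sub_sub_cancel] at hΨ''
  have hΨrefl : IsBisector (fun α => radial K (sphP (π - α) Θ) ^ 2) 0 π (π - Ψ) := by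
    simpa only [sub_self, sub_zero] using (show IsBisector _ 0 π Ψ from hΨ).comp_sub_left π
  exact hΨ''.eq_of_radial_sphP_sq hKc hKconv hK0 (continuous_const.sub continuous_id) hΨrefl

end Angles

lemma rotZ_pi_shear (Θ Φ Ψ : ℝ) (p : E3) :
    rotZ π (shear (π - Θ) Φ (π - Ψ) p) = shear Θ Φ Ψ (rotZ π p) := by
  apply E3.ext <;> simp [rotZ_pi_apply, shear, tan_pi_sub, sin_pi_sub] <;> ring

lemma shear_preimage_rotZ_pi_image (Θ Φ Ψ : ℝ) (K : Set E3) :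
    shear (π - Θ) Φ (π - Ψ) ⁻¹' (rotZ π '' K) = rotZ π ⁻¹' (shear Θ Φ Ψ ⁻¹' K) := by
  rw [rotZ_pi_image, ← preimage_comp, ← preimage_comp]
  exact congrArg (· ⁻¹' K) (funext (rotZ_pi_shear Θ Φ Ψ))

section Quadrants

variable (L : Set E3)

lemma vol₁_rotZ_pi_preimage : vol₁ (rotZ π ⁻¹' L) = vol₃ L := by
  rw [vol₁, vol₃, rotZ_pi_preimage_inter, volume_preimage_rotZ]
  congr 3; ext p; simp [rotZ_pi_apply]

lemma vol₂_rotZ_pi_preimage : vol₂ (rotZ π ⁻¹' L) = vol₄ L := by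
  rw [vol₂, vol₄, rotZ_pi_preimage_inter, volume_preimage_rotZ]
  congr 3; ext p; simp [rotZ_pi_apply]

lemma vol₃_rotZ_pi_preimage : vol₃ (rotZ π ⁻¹' L) = vol₁ L := by
  rw [vol₃, vol₁, rotZ_pi_preimage_inter, volume_preimage_rotZ]
  congr 3; ext p; simp [rotZ_pi_apply]

lemma vol₄_rotZ_pi_preimage : vol₄ (rotZ π ⁻¹' L) = vol₂ L := by
  rw [vol₄, vol₂, rotZ_pi_preimage_inter, volume_preimage_rotZ]
  congr 3; ext p; simp [rotZ_pi_apply]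

lemma Ffun_rotZ_pi_preimage : Ffun (rotZ π ⁻¹' L) = -Ffun L := by
  rw [Ffun, Ffun, rotZ_pi_preimage_inter, rotZ_pi_preimage_inter, hausdorffMeasure_preimage_rotZ,
    hausdorffMeasure_preimage_rotZ, neg_sub]
  congr 4 <;> ext p <;> simp [rotZ_pi_apply]

lemma Gfun_rotZ_pi_preimage : Gfun (rotZ π ⁻¹' L) = Gfun L := by
  rw [Gfun, Gfun, vol₁_rotZ_pi_preimage, vol₂_rotZ_pi_preimage, vol₃_rotZ_pi_preimage,
    vol₄_rotZ_pi_preimage]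
  ring

lemma Hfun_rotZ_pi_preimage : Hfun (rotZ π ⁻¹' L) = -Hfun L := by
  rw [Hfun, Hfun, vol₁_rotZ_pi_preimage, vol₂_rotZ_pi_preimage, vol₃_rotZ_pi_preimage,
    vol₄_rotZ_pi_preimage]
  ring

end Quadrants

/-- Lemmas 5.10 and 5.11: for `K ∈ 𝒦̂`, `Θ(Z(π)K) = π − Θ(K)`, `Φ(Z(π)K) = Φ(K)`,
`Ψ(Z(π)K) = π − Ψ(K)`, and `F(Z(π)K) = −F(K)`, `G(Z(π)K) = G(K)`, `H(Z(π)K) = −H(K)`. -/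
theorem FGH_rotZ_pi (K : Set E3) (hK : IsKhat K)
    (Θ Φ Ψ : ℝ) (hΘ : ThetaEq K Θ) (hΦ : PhiEq K Φ) (hΨ : PsiEq K Θ Ψ)
    (Θ' Φ' Ψ' : ℝ)
    (hΘ' : ThetaEq (rotZ π '' K) Θ')
    (hΦ' : PhiEq (rotZ π '' K) Φ')
    (hΨ' : PsiEq (rotZ π '' K) Θ' Ψ') :
    Θ' = π - Θ ∧ Φ' = Φ ∧ Ψ' = π - Ψ ∧
      Ffun (shear Θ' Φ' Ψ' ⁻¹' (rotZ π '' K)) = -Ffun (shear Θ Φ Ψ ⁻¹' K) ∧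
      Gfun (shear Θ' Φ' Ψ' ⁻¹' (rotZ π '' K)) = Gfun (shear Θ Φ Ψ ⁻¹' K) ∧
      Hfun (shear Θ' Φ' Ψ' ⁻¹' (rotZ π '' K)) = -Hfun (shear Θ Φ Ψ ⁻¹' K) := by
  obtain ⟨hKc, hKconv, hint, hsymm, -⟩ := hK
  have hK0 : K ∈ 𝓝 0 := hKconv.mem_nhds_zero_of_neg_eq hsymm.symm hint
  obtain rfl : Θ' = π - Θ := hΘ.rotZ_pi_image hKc hKconv hK0 hΘ'
  obtain rfl : Φ' = Φ := hΦ.rotZ_pi_image hKc hKconv hK0 hsymm.symm hΦ'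
  obtain rfl : Ψ' = π - Ψ := hΨ.rotZ_pi_image hKc hKconv hK0 hΨ'
  rw [shear_preimage_rotZ_pi_image]
  exact ⟨rfl, rfl, rfl, Ffun_rotZ_pi_preimage _, Gfun_rotZ_pi_preimage _, Hfun_rotZ_pi_preimage _⟩
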